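/- arXiv:2505.13234 — 2 statements merged into one kernel-verified Lean document; each statement's English description precedes it below -/
import Mathlib

section
/- Let X : [a,b] → ℝ³ be a piecewise C¹ path that is Legendrian, i.e., Ẋ₁(t)·X₃(t) = Ẋ₂(t) for all t where the derivative exists. Then for every word w over {1,2,3}, the signature of X satisfies ⟨σ(X), 31w⟩ − ⟨σ(X), 2w⟩ + X₃(a)·⟨σ(X), 1w⟩ = 0. -/
/-!
Appending a letter `j` to a word is integration against `dXⱼ`, so a linear relation between
signature coefficients that holds on every initial segment `[a, t]` persists when the same
letter is appended to all its words. By induction on `w` it therefore suffices to treat the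
empty word, where `⟨σ, 31⟩(t) = ∫ₐᵗ (X₃ - X₃(a)) dX₁`; off the finitely many break points of
the path the Legendrian condition turns the integrand into `Ẋ₂ - X₃(a) Ẋ₁`.
-/

noncomputable def sigAux {d : ℕ} (X : ℝ → Fin d → ℝ) (a : ℝ) : List (Fin d) → ℝ → ℝ
  | [] => fun _ => 1
  | i :: w => fun t => ∫ s in a..t, sigAux X a w s * deriv (fun u => X u i) s

/-- `sig X a w t` is the signature coefficient `⟨σ(X|[a,t]), w⟩`, the iterated integral
of the derivatives of the coordinates of `X` indexed by the word `w` (in reading order,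
first letter innermost). -/
noncomputable def sig {d : ℕ} (X : ℝ → Fin d → ℝ) (a : ℝ) (w : List (Fin d)) (t : ℝ) : ℝ :=
  sigAux X a w.reverse t

/-- A continuous path, piecewise of class `C¹` on `[a,b]`. -/
def PiecewiseC1 {d : ℕ} (X : ℝ → Fin d → ℝ) (a b : ℝ) : Prop :=
  ContinuousOn X (Set.Icc a b) ∧
  ∃ (n : ℕ) (t : Fin (n + 1) → ℝ), t 0 = a ∧ t (Fin.last n) = b ∧ StrictMono t ∧
    ∀ i : Fin n, ContDiffOn ℝ 1 X (Set.Icc (t i.castSucc) (t i.succ))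

open MeasureTheory Set

theorem Fin.Ioc_subset_iUnion_Ioc {α : Type*} [LinearOrder α] {n : ℕ} (τ : Fin (n + 1) → α) :
    Ioc (τ 0) (τ (Fin.last n)) ⊆ ⋃ i : Fin n, Ioc (τ i.castSucc) (τ i.succ) := by
  suffices ∀ m : Fin (n + 1), Ioc (τ 0) (τ m) ⊆ ⋃ i : Fin n, Ioc (τ i.castSucc) (τ i.succ) from
    this _
  intro m
  induction m using Fin.induction with
  | zero => simp
  | succ m ih =>
    intro s hs
    rcases le_or_gt s (τ m.castSucc) with h | h
    · exact ih ⟨hs.1, h⟩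
    · exact mem_iUnion.2 ⟨m, h, hs.2⟩

theorem ContDiffOn.integrableOn_deriv_Ioc {f : ℝ → ℝ} {p q : ℝ}
    (hf : ContDiffOn ℝ 1 f (Icc p q)) : IntegrableOn (deriv f) (Ioc p q) := by
  rcases le_or_gt q p with hqp | hpq
  · simp [Ioc_eq_empty_of_le hqp]
  have hcont : ContinuousOn (derivWithin f (Icc p q)) (Icc p q) :=
    hf.continuousOn_derivWithin (uniqueDiffOn_Icc hpq) le_rfl
  have heq : EqOn (derivWithin f (Icc p q)) (deriv f) (Ioo p q) := fun x hx =>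
    derivWithin_of_mem_nhds (Icc_mem_nhds hx.1 hx.2)
  rw [integrableOn_Ioc_iff_integrableOn_Ioo]
  exact (hcont.integrableOn_Icc.mono_set Ioo_subset_Icc_self).congr_fun heq measurableSet_Ioo

namespace PiecewiseC1

variable {d : ℕ} {X : ℝ → Fin d → ℝ} {a b : ℝ}

theorem le (hX : PiecewiseC1 X a b) : a ≤ b := by
  obtain ⟨-, n, τ, rfl, rfl, hτ, -⟩ := hX
  exact hτ.monotone (Fin.zero_le _)

theorem exists_countable_differentiableAt (hX : PiecewiseC1 X a b) :
    ∃ S : Set ℝ, S.Countable ∧ ∀ s ∈ Icc a b \ S, DifferentiableAt ℝ X s := by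
  obtain ⟨-, n, τ, rfl, rfl, -, hτC⟩ := hX
  refine ⟨range τ, countable_range τ, fun s ⟨hs, hsτ⟩ => ?_⟩
  have hs' : s ∈ Ioc (τ 0) (τ (Fin.last n)) :=
    ⟨hs.1.lt_of_ne fun h => hsτ ⟨0, h⟩, hs.2⟩
  obtain ⟨i, hi⟩ := mem_iUnion.1 (Fin.Ioc_subset_iUnion_Ioc τ hs')
  have hlt : s < τ i.succ := hi.2.lt_of_ne fun h => hsτ ⟨i.succ, h.symm⟩
  exact ((hτC i).differentiableOn one_ne_zero).differentiableAt (Icc_mem_nhds hi.1 hlt)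

theorem intervalIntegrable_deriv (hX : PiecewiseC1 X a b) (j : Fin d) {t : ℝ}
    (ht : t ∈ Icc a b) : IntervalIntegrable (deriv fun u => X u j) volume a t := by
  have hab : IntervalIntegrable (deriv fun u => X u j) volume a b := by
    obtain ⟨-, n, τ, rfl, rfl, hτ, hτC⟩ := hX
    rw [intervalIntegrable_iff_integrableOn_Ioc_of_le (hτ.monotone (Fin.zero_le _))]
    refine (integrableOn_finite_iUnion.2 fun i => ?_).mono_set (Fin.Ioc_subset_iUnion_Ioc τ)
    exact (contDiffOn_pi.1 (hτC i) j).integrableOn_deriv_Ioc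
  refine hab.mono_set ?_
  rw [uIcc_of_le ht.1, uIcc_of_le hX.le]
  exact Icc_subset_Icc_right ht.2

theorem integral_deriv (hX : PiecewiseC1 X a b) (j : Fin d) {t : ℝ} (ht : t ∈ Icc a b) :
    ∫ s in a..t, deriv (fun u => X u j) s = X t j - X a j := by
  obtain ⟨S, hS, hdiff⟩ := hX.exists_countable_differentiableAt
  refine integral_eq_of_hasDerivAt_off_countable_of_le _ _ ht.1 hS
    ((continuousOn_pi.1 hX.1 j).mono (Icc_subset_Icc_right ht.2)) (fun s hs => ?_)
    (hX.intervalIntegrable_deriv j ht)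
  have hsab : s ∈ Icc a b \ S := ⟨⟨hs.1.1.le, hs.1.2.le.trans ht.2⟩, hs.2⟩
  exact (differentiableAt_pi.1 (hdiff s hsab) j).hasDerivAt

end PiecewiseC1

section Signature

variable {d : ℕ} (X : ℝ → Fin d → ℝ) (a : ℝ)

theorem sig_append_singleton (u : List (Fin d)) (j : Fin d) (t : ℝ) :
    sig X a (u ++ [j]) t = ∫ s in a..t, sig X a u s * deriv (fun r => X r j) s := by
  simp [sig, sigAux]

variable {X a} {t : ℝ}

theorem continuousOn_sigAux (hX : ∀ j, IntervalIntegrable (deriv fun u => X u j) volume a t) :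
    ∀ v : List (Fin d), ContinuousOn (sigAux X a v) (uIcc a t)
  | [] => continuousOn_const
  | i :: v => intervalIntegral.continuousOn_primitive_interval'
      ((hX i).continuousOn_mul (continuousOn_sigAux hX v)) left_mem_uIcc

theorem sum_mul_sig_append_singleton_eq_zero {ι : Type*} (s : Finset ι) (c : ι → ℝ)
    (u : ι → List (Fin d)) (j : Fin d)
    (hX : ∀ i, IntervalIntegrable (deriv fun r => X r i) volume a t)
    (h : ∀ r ∈ uIcc a t, ∑ k ∈ s, c k * sig X a (u k) r = 0) :
    ∑ k ∈ s, c k * sig X a (u k ++ [j]) t = 0 := by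
  have hint : ∀ k ∈ s, IntervalIntegrable
      (fun r => c k * (sig X a (u k) r * deriv (fun r => X r j) r)) volume a t :=
    fun k _ => ((hX j).continuousOn_mul (continuousOn_sigAux hX _)).const_mul _
  simp_rw [sig_append_singleton, ← intervalIntegral.integral_const_mul,
    ← intervalIntegral.integral_finsetSum hint]
  refine (intervalIntegral.integral_congr fun r hr => ?_).trans intervalIntegral.integral_zero
  simp only [← mul_assoc, ← Finset.sum_mul, h r hr, zero_mul]

end Signature

theorem sig_two_zero_of_legendrian {a b t : ℝ} {X : ℝ → Fin 3 → ℝ} (hX : PiecewiseC1 X a b)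
    (hLeg : ∀ t ∈ Icc a b, DifferentiableAt ℝ X t →
      deriv (fun u => X u 0) t * X t 2 = deriv (fun u => X u 1) t)
    (ht : t ∈ Icc a b) :
    sig X a [2, 0] t = (X t 1 - X a 1) - X a 2 * (X t 0 - X a 0) := by
  have hsub : Icc a t ⊆ Icc a b := Icc_subset_Icc_right ht.2
  obtain ⟨S, hS, hdiff⟩ := hX.exists_countable_differentiableAt
  have hae : ∀ᵐ s, s ∈ uIoc a t → sig X a [2] s * deriv (fun u => X u 0) s =
      deriv (fun u => X u 1) s - X a 2 * deriv (fun u => X u 0) s := by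
    filter_upwards [hS.ae_notMem volume] with s hsS hs
    rw [uIoc_of_le ht.1] at hs
    have hsab : s ∈ Icc a b := hsub (Ioc_subset_Icc_self hs)
    have hs2 : sig X a [2] s = X s 2 - X a 2 := by
      simp [sig, sigAux, hX.integral_deriv 2 hsab]
    rw [hs2, ← hLeg s hsab (hdiff s ⟨hsab, hsS⟩)]
    ring
  rw [show ([2, 0] : List (Fin 3)) = [2] ++ [0] from rfl, sig_append_singleton,
    intervalIntegral.integral_congr_ae hae,
    intervalIntegral.integral_sub (hX.intervalIntegrable_deriv 1 ht)
      ((hX.intervalIntegrable_deriv 0 ht).const_mul _),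
    intervalIntegral.integral_const_mul, hX.integral_deriv 0 ht, hX.integral_deriv 1 ht]

theorem legendrian_sig_relation_general {a b : ℝ} (X : ℝ → Fin 3 → ℝ)
    (hX : PiecewiseC1 X a b)
    (hLeg : ∀ t ∈ Set.Icc a b, DifferentiableAt ℝ X t →
      deriv (fun u => X u 0) t * X t 2 = deriv (fun u => X u 1) t) :
    ∀ w : List (Fin 3),
      sig X a (2 :: 0 :: w) b - sig X a (1 :: w) b + X a 2 * sig X a (0 :: w) b = 0 := by
  have hrel : ∀ w : List (Fin 3), ∀ t ∈ Icc a b,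
      ∑ k : Fin 3, ![1, -1, X a 2] k * sig X a (![[2, 0], [1], [0]] k ++ w) t = 0 := by
    intro w
    induction w using List.reverseRecOn with
    | nil =>
      intro t ht
      have hsingle : ∀ j, sig X a [j] t = X t j - X a j := fun j => by
        simp [sig, sigAux, hX.integral_deriv j ht]
      simp only [List.append_nil, Fin.sum_univ_three, Matrix.cons_val_zero, Matrix.cons_val_one,
        Matrix.cons_val, sig_two_zero_of_legendrian hX hLeg ht, hsingle]
      ring
    | append_singleton w j ih =>
      intro t ht
      simp_rw [← List.append_assoc]
      refine sum_mul_sig_append_singleton_eq_zero _ _ _ j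
        (fun i => hX.intervalIntegrable_deriv i ht) fun r hr => ih r ?_
      rw [uIcc_of_le ht.1] at hr
      exact Icc_subset_Icc_right ht.2 hr
  intro w
  simpa [Fin.sum_univ_three, ← sub_eq_add_neg] using hrel w b ⟨hX.le, le_rfl⟩

/-- If `X : [a,b] → ℝ³` is a piecewise C¹ Legendrian path (i.e. `Ẋ₁ X₃ = Ẋ₂` wherever
the derivative exists), then `⟨σ(X), 31w⟩ − ⟨σ(X), 2w⟩ + X₃(a)⟨σ(X), 1w⟩ = 0` for
every word `w`. (Letters 1,2,3 are `0,1,2 : Fin 3`.) -/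
theorem legendrian_sig_relation {a b : ℝ} (hab : a < b) (X : ℝ → Fin 3 → ℝ)
    (hX : PiecewiseC1 X a b)
    (hLeg : ∀ t ∈ Set.Icc a b, DifferentiableAt ℝ X t →
      deriv (fun u => X u 0) t * X t 2 = deriv (fun u => X u 1) t) :
    ∀ w : List (Fin 3),
      sig X a (2 :: 0 :: w) b - sig X a (1 :: w) b + X a 2 * sig X a (0 :: w) b = 0 :=
  legendrian_sig_relation_general X hX hLeg
end

section
/- If a word w over an alphabet contains a fixed letter a, then w is a linear combination of elements of the form (a·qᵢ) ⧢ rᵢ where qᵢ, rᵢ are words and ⧢ denotes the shuffle product. -/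
/-- The list of all shuffles (interleavings) of two words. -/
def shuffles {α : Type*} : List α → List α → List (List α)
  | [], ys => [ys]
  | xs, [] => [xs]
  | x :: xs, y :: ys =>
      (shuffles xs (y :: ys)).map (x :: ·) ++ (shuffles (x :: xs) ys).map (y :: ·)
  termination_by xs ys => xs.length + ys.length

/-- Shuffle product of two words, as an element of the free vector space on words. -/
noncomputable def shOne {α : Type*} (u v : List α) : List α →₀ ℝ :=
  ((shuffles u v).map (fun z => Finsupp.single z (1 : ℝ))).sum

theorem Submodule.list_sum_sub_count_smul_mem {R M : Type*} [Ring R] [AddCommGroup M]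
    [Module R M] [DecidableEq M] {S : Submodule R M} {x : M} :
    ∀ {L : List M}, (∀ y ∈ L, y = x ∨ y ∈ S) → L.sum - L.count x • x ∈ S
  | [], _ => by simp
  | y :: L, hL => by
    have ih := list_sum_sub_count_smul_mem fun z hz => hL z (List.mem_cons_of_mem y hz)
    by_cases hyx : y = x
    · subst hyx
      simpa [List.count_cons_self, succ_nsmul, add_sub_add_comm] using ih
    · have hy := (hL y List.mem_cons_self).resolve_left hyx
      simpa [List.count_cons, hyx, add_sub_assoc] using S.add_mem hy ih

/-- Cancelling the terms of `L` that lie in `S` leaves a positive multiple of `x`. -/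
theorem Submodule.mem_of_list_sum_mem {K M : Type*} [DivisionRing K] [CharZero K]
    [AddCommGroup M] [Module K M] {S : Submodule K M} {L : List M} {x : M} (hx : x ∈ L)
    (hL : ∀ y ∈ L, y = x ∨ y ∈ S) (hsum : L.sum ∈ S) : x ∈ S := by
  classical
  have hcount : (L.count x : K) • x ∈ S := by
    simpa [Nat.cast_smul_eq_nsmul] using S.sub_mem hsum (S.list_sum_sub_count_smul_mem hL)
  exact (S.smul_mem_iff (Nat.cast_ne_zero.2 (List.count_pos_iff.2 hx).ne')).1 hcount

theorem shuffles_nil_left {α : Type*} (ys : List α) : shuffles [] ys = [ys] := by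
  cases ys <;> simp [shuffles]

theorem shuffles_nil_right {α : Type*} (xs : List α) : shuffles xs [] = [xs] := by
  cases xs <;> simp [shuffles]

theorem shuffles_cons_cons {α : Type*} (x y : α) (xs ys : List α) :
    shuffles (x :: xs) (y :: ys) =
      (shuffles xs (y :: ys)).map (x :: ·) ++ (shuffles (x :: xs) ys).map (y :: ·) := by
  simp [shuffles]

theorem append_mem_shuffles {α : Type*} : ∀ xs ys : List α, ys ++ xs ∈ shuffles xs ys
  | xs, [] => by simp [shuffles_nil_right]
  | [], y :: ys => by simp [shuffles_nil_left]
  | x :: xs, y :: ys => by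
    rw [shuffles_cons_cons]
    exact List.mem_append_right _ (List.mem_map_of_mem (append_mem_shuffles (x :: xs) ys))

theorem eq_or_exists_shorter_of_mem_shuffles {α : Type*} (a : α) (q : List α) :
    ∀ {p z : List α}, z ∈ shuffles (a :: q) p →
      z = p ++ a :: q ∨ ∃ p' t : List α, p'.length < p.length ∧ z = p' ++ a :: t
  | [], z, hz => by simp_all [shuffles_nil_right]
  | y :: p, z, hz => by
    rw [shuffles_cons_cons, List.mem_append, List.mem_map, List.mem_map] at hz
    rcases hz with ⟨t, -, rfl⟩ | ⟨z, hz, rfl⟩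
    · exact Or.inr ⟨[], t, by simp, rfl⟩
    · rcases eq_or_exists_shorter_of_mem_shuffles a q hz with rfl | ⟨p', t, hlt, rfl⟩
      · exact Or.inl rfl
      · exact Or.inr ⟨y :: p', t, by simpa using hlt, rfl⟩

/-- By induction on the length of `p`: in `(a :: q) ⧢ p` every term other than `p ++ a :: q`
has a shorter prefix before its `a`. -/
theorem single_append_cons_mem_span_shOne {α : Type*} (a : α) (p q : List α) :
    Finsupp.single (p ++ a :: q) (1 : ℝ) ∈ Submodule.span ℝ
      {f : List α →₀ ℝ | ∃ q r : List α, f = shOne (a :: q) r} := by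
  refine Submodule.mem_of_list_sum_mem
    (L := (shuffles (a :: q) p).map (Finsupp.single · 1))
    (List.mem_map_of_mem (append_mem_shuffles (a :: q) p)) ?_
    (Submodule.subset_span ⟨q, p, rfl⟩)
  intro _ hy
  obtain ⟨z, hz, rfl⟩ := List.mem_map.1 hy
  rcases eq_or_exists_shorter_of_mem_shuffles a q hz with rfl | ⟨p', t, _, rfl⟩
  · exact Or.inl rfl
  · exact Or.inr (single_append_cons_mem_span_shOne a p' t)
termination_by p.length

/-- If a word `w` contains the letter `a`, then `w` is a linear combination of elements
of the form `(a·q) ⧢ r` with `q, r` words. -/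
theorem word_mem_span_shuffles {α : Type*} (a : α) (w : List α) (ha : a ∈ w) :
    Finsupp.single w (1 : ℝ) ∈ Submodule.span ℝ
      {f : List α →₀ ℝ | ∃ q r : List α, f = shOne (a :: q) r} := by
  obtain ⟨p, q, rfl⟩ := List.append_of_mem ha
  exact single_append_cons_mem_span_shOne a p q
end
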